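/- arXiv:1504.02717 — 2 statements merged into one kernel-verified Lean document; each statement's English description precedes it below -/
import Mathlib

section
/- If (S, N) is a quadratic normalisation of class (3, 3), then the associated rewriting system (S, R) is convergent; more precisely, every rewriting sequence starting from a length-p word has length at most p(p−1)/2. Moreover, if e is an N-neutral element of S, then the rewriting system (S∖{e}, R_e) is also convergent, where R_e consists of the rules s·t → π_e(N̄(s·t)) for s, t ∈ S∖{e} with s·t ≠ N̄(s·t). -/
namespace QN

variable {S A : Type*}

/-- A normalisation: a length-preserving map `N` on words over `S` fixing
length-one words and satisfying `N (u ++ N w ++ v) = N (u ++ w ++ v)`. -/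
structure Normalisation (S : Type*) where
  N : List S → List S
  length_eq : ∀ w : List S, (N w).length = w.length
  single : ∀ s : S, N [s] = [s]
  mid : ∀ u v w : List S, N (u ++ N w ++ v) = N (u ++ w ++ v)

/-- Extract the two entries of a length-two word (with a default fallback). -/
def pairOf : List S → S → S → S × S
  | [x, y], _, _ => (x, y)
  | _, s, t => (s, t)

/-- The restriction `N̄` of `N` to length-two words, as a map on pairs. -/
def nbar (N : List S → List S) (s t : S) : S × S :=
  pairOf (N [s, t]) s t

/-- Apply `f` to the length-two factor at (1-indexed) position `i`;
out-of-range positions act as the identity. -/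
def applyAt (f : S → S → S × S) : ℕ → List S → List S
  | 1, a :: b :: l => (f a b).1 :: (f a b).2 :: l
  | n + 2, a :: l => a :: applyAt f (n + 1) l
  | _, l => l

/-- `φ_u`: apply `φ` at the successive positions of `u`, leftmost entry of `u` first. -/
def applySeq (f : S → S → S × S) (u : List ℕ) (w : List S) : List S :=
  u.foldl (fun w i => applyAt f i w) w

/-- A word is `N`-normal iff all its length-two factors are `N`-normal. -/
def LocallyNormal (N : List S → List S) : Prop :=
  ∀ w : List S, N w = w ↔ ∀ u v : List S, ∀ s t : S, w = u ++ s :: t :: v → N [s, t] = [s, t]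

/-- Every word is normalised by finitely many applications of `N̄` at positions. -/
def NbarGenerated (N : List S → List S) : Prop :=
  ∀ w : List S, ∃ u : List ℕ, N w = applySeq (nbar N) u w

/-- A normalisation map is quadratic if it satisfies the two locality conditions. -/
def Quadratic (N : List S → List S) : Prop :=
  LocallyNormal N ∧ NbarGenerated N

/-- `e` is `N`-neutral: `N (w·e) = N (e·w) = N w · e`. -/
def Neutral (N : List S → List S) (e : S) : Prop :=
  ∀ w : List S, N (w ++ [e]) = N w ++ [e] ∧ N (e :: w) = N w ++ [e]

/-- The alternating sequence of length `m` starting with `k ∈ {1,2}`. -/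
def altFrom : ℕ → ℕ → List ℕ
  | _, 0 => []
  | k, n + 1 => k :: altFrom (3 - k) n

/-- `(S, N)` is of left-class `c`: `N = N̄_{α_c}` on length-three words. -/
def LeftClass (N : List S → List S) (c : ℕ) : Prop :=
  ∀ w : List S, w.length = 3 → N w = applySeq (nbar N) (altFrom 1 c) w

/-- `(S, N)` is of right-class `c`: `N = N̄_{ᾱ_c}` on length-three words. -/
def RightClass (N : List S → List S) (c : ℕ) : Prop :=
  ∀ w : List S, w.length = 3 → N w = applySeq (nbar N) (altFrom 2 c) w

/-- The domino rule is valid for `f`. -/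
def DominoRule (f : S → S → S × S) : Prop :=
  ∀ s₁ s₂ s₁' s₂' t₀ t₁ t₂ : S,
    f t₀ s₁ = (s₁', t₁) → f t₁ s₂ = (s₂', t₂) →
    f s₁ s₂ = (s₁, s₂) → f s₁' s₂' = (s₁', s₂')

/-- The sequences `δ_p`: `δ₁ = ε` and `δ_p = sh(δ_{p-1})·1·2·⋯·(p-1)`. -/
def delta : ℕ → List ℕ
  | 0 => []
  | 1 => []
  | p + 2 => (delta (p + 1)).map (· + 1) ++ List.range' 1 (p + 1)

/-- Apply `N` to the length-`k` factor beginning at (1-indexed) position `i`. -/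
def applyFactorAt (N : List S → List S) (k : ℕ) : ℕ → List S → List S
  | 0, w => w
  | i + 1, w => w.take i ++ N ((w.drop i).take k) ++ w.drop (i + k)

/-- Apply `N` to length-`k` factors at the successive positions of `u`. -/
def applyFactorSeq (N : List S → List S) (k : ℕ) (u : List ℕ) (w : List S) : List S :=
  u.foldl (fun w i => applyFactorAt N k i w) w

/-- One-step rewriting relation of a rewriting system `R`. -/
def RStep (R : List A → List A → Prop) (x y : List A) : Prop :=
  ∃ u v w w', R w w' ∧ x = u ++ w ++ v ∧ y = u ++ w' ++ v

/-- A rewriting system is terminating if it admits no infinite rewriting sequence. -/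
def Terminating (R : List A → List A → Prop) : Prop :=
  ¬ ∃ f : ℕ → List A, ∀ n, RStep R (f n) (f (n + 1))

/-- Confluence of a rewriting system. -/
def Confluent (R : List A → List A → Prop) : Prop :=
  ∀ w w₁ w₂ : List A, Relation.ReflTransGen (RStep R) w w₁ →
    Relation.ReflTransGen (RStep R) w w₂ →
    ∃ w', Relation.ReflTransGen (RStep R) w₁ w' ∧ Relation.ReflTransGen (RStep R) w₂ w'

/-- A word is `R`-normal if no rule of `R` applies to any of its factors. -/
def RNormal (R : List A → List A → Prop) (w : List A) : Prop :=
  ¬ ∃ w', RStep R w w'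

/-- Every word rewrites to some `R`-normal word. -/
def Normalising (R : List A → List A → Prop) : Prop :=
  ∀ w : List A, ∃ w', Relation.ReflTransGen (RStep R) w w' ∧ RNormal R w'

/-- A rewriting system is quadratic if all its rules relate length-two words. -/
def QuadraticRS (R : List A → List A → Prop) : Prop :=
  ∀ w w', R w w' → w.length = 2 ∧ w'.length = 2

/-- A rewriting system is reduced. -/
def ReducedRS (R : List A → List A → Prop) : Prop :=
  ∀ w w', R w w' → RNormal R w' ∧ RNormal (fun a b => R a b ∧ ¬(a = w ∧ b = w')) w

/-- The rewriting system associated with a quadratic normalisation: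
one rule `s·t → N̄(s·t)` for each non-`N`-normal length-two word. -/
def rules (N : List S → List S) : List S → List S → Prop :=
  fun w w' => ∃ s t : S, w = [s, t] ∧ w' = N [s, t] ∧ w' ≠ w

/-- `π_e`: delete all occurrences of `e`, landing in words over `S∖{e}`. -/
noncomputable def pie (e : S) (w : List S) : List {s : S // s ≠ e} :=
  w.filterMap fun s => @dite _ (s = e) (Classical.dec _) (fun _ => none) (fun h => some ⟨s, h⟩)

/-- The rewriting system `R_e` over `S∖{e}`. -/
def rulesE (N : List S → List S) (e : S) :
    List {s : S // s ≠ e} → List {s : S // s ≠ e} → Prop :=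
  fun w w' => ∃ s t : {s : S // s ≠ e},
    w = [s, t] ∧ N [s.1, t.1] ≠ [s.1, t.1] ∧ w' = pie e (N [s.1, t.1])

/-- `M` admits the monoid presentation `⟨S ∣ r⟩`. -/
def PresentedBy (M : Type*) [Monoid M] (S : Type*) (r : List S → List S → Prop) : Prop :=
  Nonempty ((conGen fun a b : FreeMonoid S => r a.toList b.toList).Quotient ≃* M)

/-- Left-divisibility in a monoid. -/
def LeftDvd {M : Type*} [Monoid M] (f g : M) : Prop :=
  ∃ g', f * g' = g

/-- The pair `s₁, s₂` is `S`-normal (greedy). -/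
def SNormalPair {M : Type*} [Monoid M] (S : Set M) (s₁ s₂ : M) : Prop :=
  ∀ s ∈ S, ∀ f : M, LeftDvd s (f * s₁ * s₂) → LeftDvd s (f * s₁)

/-- A word over `S` is `S`-normal if all its adjacent pairs are. -/
def SNormalWord {M : Type*} [Monoid M] (S : Set M) (w : List S) : Prop :=
  ∀ u v : List S, ∀ a b : S, w = u ++ a :: b :: v → SNormalPair S (a : M) (b : M)

end QN

/-!
Class (3, 3) gives that `f = N̄` is idempotent and satisfies the braid relation
`f₁ f₂ f₁ = f₂ f₁ f₂` on words of length three. Label the letters of a word by their initial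
positions and let a rewriting step `s·t → f s t` exchange the labels of its two letters. Call a
pair of letters with inverted labels frozen if no rewriting between them can make them adjacent and
non-normal (`Swappable`). The braid relation shows that frozenness survives every step, including a
step that pushes a letter into the pair's segment from outside. Hence no step undoes an inversion,
every step creates one, and a word of length `p` admits at most `p(p-1)/2` steps. Confluence holds
because every step preserves `N` and the steps of `N̄` reach `N w`. For a neutral `e`, the word
`π_e (N w)` is invariant under `R_e`-steps, and length-preserving `R_e`-steps are `R`-steps, which
transfers both properties to `R_e`.
-/

theorem List.append_cons_eq_append_cons_cons {α : Type*} {B C P Q : List α} {q c₁ c₂ : α}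
    (h : B ++ q :: C = P ++ c₁ :: c₂ :: Q) :
    (∃ B₂, P = B ++ q :: B₂ ∧ C = B₂ ++ c₁ :: c₂ :: Q) ∨ (B = P ∧ q = c₁ ∧ C = c₂ :: Q) ∨
      (B = P ++ [c₁] ∧ q = c₂ ∧ C = Q) ∨ (∃ B₂, B = P ++ c₁ :: c₂ :: B₂ ∧ Q = B₂ ++ q :: C) := by
  rcases List.append_eq_append_iff.mp h with
    ⟨_ | ⟨a, as⟩, rfl, h'⟩ | ⟨_ | ⟨b, _ | ⟨b', bs⟩⟩, rfl, h'⟩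
  · simp_all
  · simp only [List.cons_append, List.cons.injEq] at h'
    exact .inl ⟨as, by simp [h'.1], h'.2⟩
  · simp_all
  · simp_all
  · simp only [List.cons_append, List.cons.injEq] at h'
    exact .inr (.inr (.inr ⟨bs, by simp [h'.1, h'.2.1], h'.2.2⟩))

namespace QN

variable {S : Type*} {f : S → S → S × S}

structure BraidIdempotent (f : S → S → S × S) : Prop where
  idem : ∀ a b : S, f (f a b).1 (f a b).2 = f a b
  braid : ∀ x a b : S, applySeq f [1, 2, 1] [x, a, b] = applySeq f [2, 1, 2] [x, a, b]

namespace BraidIdempotent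

variable (hf : BraidIdempotent f) (x a b : S)
include hf

theorem braid_eqs :
    (f (f x a).1 (f (f x a).2 b).1).1 = (f x (f a b).1).1 ∧
    (f (f x a).1 (f (f x a).2 b).1).2 = (f (f x (f a b).1).2 (f a b).2).1 ∧
    (f (f x a).2 b).2 = (f (f x (f a b).1).2 (f a b).2).2 := by
  have h : [(f (f x a).1 (f (f x a).2 b).1).1, (f (f x a).1 (f (f x a).2 b).1).2,
      (f (f x a).2 b).2] = [(f x (f a b).1).1, (f (f x (f a b).1).2 (f a b).2).1,
      (f (f x (f a b).1).2 (f a b).2).2] := hf.braid x a b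
  simpa using h

theorem braid_fst : (f (f x a).1 (f (f x a).2 b).1).1 = (f x (f a b).1).1 :=
  (hf.braid_eqs x a b).1

theorem braid_snd :
    (f (f x a).1 (f (f x a).2 b).1).2 = (f (f x (f a b).1).2 (f a b).2).1 :=
  (hf.braid_eqs x a b).2.1

theorem braid_last : (f (f x a).2 b).2 = (f (f x (f a b).1).2 (f a b).2).2 :=
  (hf.braid_eqs x a b).2.2

variable {a b} in
theorem push_normal (h : f a b = (a, b)) :
    f (f x a).1 (f (f x a).2 b).1 = ((f x a).1, (f (f x a).2 b).1) := by
  have h₁ := hf.braid_fst x a b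
  have h₂ := hf.braid_snd x a b
  rw [h] at h₁ h₂
  exact Prod.ext h₁ h₂

end BraidIdempotent

def mirror (f : S → S → S × S) (x y : S) : S × S := ((f y x).2, (f y x).1)

theorem mirror_eq_self_iff {x y : S} : mirror f x y = (x, y) ↔ f y x = (y, x) := by
  simp only [mirror, Prod.ext_iff]
  tauto

theorem BraidIdempotent.mirror (hf : BraidIdempotent f) : BraidIdempotent (mirror f) where
  idem a b := by simp only [QN.mirror, hf.idem]
  braid x a b := by
    show [_, _, _] = [_, _, _]
    simp only [QN.mirror, List.cons.injEq, and_true]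
    exact ⟨(hf.braid_last b a x).symm, (hf.braid_snd b a x).symm, (hf.braid_fst b a x).symm⟩

@[simp]
def pushOut (f : S → S → S × S) : S → List S → List S
  | _, [] => []
  | c, a :: u => (f c a).1 :: pushOut f (f c a).2 u

@[simp]
def pushCarry (f : S → S → S × S) : S → List S → S
  | c, [] => c
  | c, a :: u => pushCarry f (f c a).2 u

theorem pushOut_append (c : S) (u v : List S) :
    pushOut f c (u ++ v) = pushOut f c u ++ pushOut f (pushCarry f c u) v := by
  induction u generalizing c <;> simp [*]

theorem pushCarry_append (c : S) (u v : List S) :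
    pushCarry f c (u ++ v) = pushCarry f (pushCarry f c u) v := by
  induction u generalizing c <;> simp [*]

theorem eq_nil_of_pushOut_eq_nil {c : S} {u : List S} (h : pushOut f c u = []) : u = [] := by
  cases u <;> simp_all

theorem pushOut_eq_append_cons_cons {pre post : List S} {d x y : S} {u : List S}
    (h : pushOut f d u = pre ++ x :: y :: post) :
    ∃ upre α β upost, u = upre ++ α :: β :: upost ∧ pre = pushOut f d upre ∧
      x = (f (pushCarry f d upre) α).1 ∧ y = (f (f (pushCarry f d upre) α).2 β).1 ∧
      post = pushOut f (f (f (pushCarry f d upre) α).2 β).2 upost := by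
  induction pre generalizing d u with
  | nil =>
    match u, h with
    | α :: β :: upost, h =>
      simp only [pushOut, List.nil_append, List.cons.injEq] at h
      exact ⟨[], α, β, upost, rfl, rfl, h.1.symm, h.2.1.symm, h.2.2.symm⟩
  | cons z pre ih =>
    match u, h with
    | α :: u, h =>
      simp only [pushOut, List.cons_append, List.cons.injEq] at h
      obtain ⟨upre, α', β, upost, rfl, rfl, rfl, rfl, rfl⟩ := ih h.2
      exact ⟨α :: upre, α', β, upost, rfl, by simp [h.1], rfl, rfl, rfl⟩

theorem pushOut_eq_append_singleton {d y : S} {u u' : List S}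
    (h : pushOut f d u = u' ++ [y]) :
    ∃ urest β, u = urest ++ [β] ∧ u' = pushOut f d urest ∧
      y = (f (pushCarry f d urest) β).1 ∧ pushCarry f d u = (f (pushCarry f d urest) β).2 := by
  obtain ⟨urest, β, rfl⟩ : ∃ urest β, u = urest ++ [β] := by
    rcases List.eq_nil_or_concat u with rfl | ⟨urest, β, rfl⟩
    · simp at h
    · exact ⟨urest, β, List.concat_eq_append ..⟩
  rw [pushOut_append] at h
  obtain ⟨h₁, h₂⟩ := List.append_inj' h rfl
  simp only [pushOut, List.cons.injEq] at h₂
  exact ⟨urest, β, rfl, h₁.symm, h₂.1.symm, by simp [pushCarry_append]⟩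

/-- `Swappable f a u b`: rewriting steps inside the segment `a·u·b` can bring the letters
descended from `a` and from `b` next to each other as a non-normal pair. After a step `a·x → f a x`
the letter descended from `a` is `(f a x).2`, after `y·b → f y b` the one descended from `b`
is `(f y b).1`. -/
inductive Swappable (f : S → S → S × S) : S → List S → S → Prop
  | base {a b : S} : f a b ≠ (a, b) → Swappable f a [] b
  | inner {a b : S} (pre post : List S) (x y : S) : f x y ≠ (x, y) →
      Swappable f a (pre ++ (f x y).1 :: (f x y).2 :: post) b →
      Swappable f a (pre ++ x :: y :: post) b
  | left {a x b : S} {u : List S} : f a x ≠ (a, x) → Swappable f (f a x).2 u b →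
      Swappable f a (x :: u) b
  | right {a y b : S} {u : List S} : f y b ≠ (y, b) → Swappable f a u (f y b).1 →
      Swappable f a (u ++ [y]) b

structure SwapClosed (f : S → S → S × S) (P : S → List S → S → Prop) : Prop where
  base : ∀ {a b}, P a [] b → f a b = (a, b)
  inner : ∀ {a b pre post x y}, P a (pre ++ x :: y :: post) b → f x y ≠ (x, y) →
    P a (pre ++ (f x y).1 :: (f x y).2 :: post) b
  left : ∀ {a x u b}, P a (x :: u) b → f a x ≠ (a, x) → P (f a x).2 u b
  right : ∀ {a u y b}, P a (u ++ [y]) b → f y b ≠ (y, b) → P a u (f y b).1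

theorem SwapClosed.not_swappable {P : S → List S → S → Prop} (hP : SwapClosed f P)
    {a b : S} {u : List S} (h : P a u b) : ¬ Swappable f a u b := by
  intro hs
  induction hs with
  | base hne => exact hne (hP.base h)
  | inner _ _ _ _ hxy _ ih => exact ih (hP.inner h hxy)
  | left hax _ ih => exact ih (hP.left h hax)
  | right hyb _ ih => exact ih (hP.right h hyb)

theorem Swappable.reverse_of_mirror {a b : S} {u : List S} (h : Swappable (mirror f) a u b) :
    Swappable f b u.reverse a := by
  induction h with
  | base hne => exact .base fun h => hne (mirror_eq_self_iff.mpr h)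
  | inner pre post x y hxy _ ih =>
    simp only [List.reverse_append, List.reverse_cons, List.append_assoc, List.cons_append,
      List.nil_append, mirror] at ih ⊢
    exact .inner _ _ y x (fun h => hxy (mirror_eq_self_iff.mpr h)) ih
  | left hax _ ih =>
    simpa using Swappable.right (fun h => hax (mirror_eq_self_iff.mpr h)) ih
  | right hyb _ ih =>
    simpa using Swappable.left (fun h => hyb (mirror_eq_self_iff.mpr h)) ih

theorem swappable_mirror_iff {a b : S} {u : List S} :
    Swappable (mirror f) a u b ↔ Swappable f b u.reverse a :=
  ⟨Swappable.reverse_of_mirror, fun h => by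
    simpa using Swappable.reverse_of_mirror (f := mirror f) h⟩

theorem not_swappable_nil_iff {a b : S} : ¬ Swappable f a [] b ↔ f a b = (a, b) :=
  ⟨fun h => not_not.mp fun hne => h (.base hne), fun h =>
    SwapClosed.not_swappable (P := fun a u b => u = [] ∧ f a b = (a, b))
      ⟨fun h => h.2, by simp, by simp, by simp⟩ ⟨rfl, h⟩⟩

theorem BraidIdempotent.exists_pushOut_rewrite (hf : BraidIdempotent f) {d x y : S}
    {u pre post : List S} (h : pushOut f d u = pre ++ x :: y :: post) (hxy : f x y ≠ (x, y)) :
    ∃ upre α β upost, u = upre ++ α :: β :: upost ∧ f α β ≠ (α, β) ∧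
      pushOut f d (upre ++ (f α β).1 :: (f α β).2 :: upost) =
        pre ++ (f x y).1 :: (f x y).2 :: post ∧
      pushCarry f d (upre ++ (f α β).1 :: (f α β).2 :: upost) = pushCarry f d u := by
  obtain ⟨upre, α, β, upost, rfl, rfl, rfl, rfl, rfl⟩ := pushOut_eq_append_cons_cons h
  set t := pushCarry f d upre
  have hαβ : f α β ≠ (α, β) := fun h => hxy (hf.push_normal t h)
  refine ⟨upre, α, β, upost, rfl, hαβ, ?_, ?_⟩
  · rw [pushOut_append, hf.braid_fst, hf.braid_snd, hf.braid_last]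
    rfl
  · rw [pushCarry_append, pushCarry_append]
    simp only [pushCarry]
    rw [hf.braid_last t α β]

/-- The segments obtained from a non-swappable `a·u·b` by pushing a letter `c` through it, the
last carry dropped. -/
def FullPushImage (f : S → S → S × S) (A : S) (U : List S) (B : S) : Prop :=
  ∃ c a u b, ¬ Swappable f a u b ∧ A = (f c a).1 ∧ U = pushOut f (f c a).2 u ∧
    B = (f (pushCarry f (f c a).2 u) b).1

/-- The segments obtained from a non-swappable `a·w·v·B` by pushing a letter `c` through `a·w`
only. -/
def PartialPushImage (f : S → S → S × S) (A : S) (U : List S) (B : S) : Prop :=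
  ∃ c a w v, ¬ Swappable f a (w ++ v) B ∧ A = (f c a).1 ∧
    U = pushOut f (f c a).2 w ++ pushCarry f (f c a).2 w :: v

def PushImage (f : S → S → S × S) (A : S) (U : List S) (B : S) : Prop :=
  FullPushImage f A U B ∨ PartialPushImage f A U B

namespace FullPushImage

variable (hf : BraidIdempotent f) {A B : S} {U : List S}
include hf

theorem base (h : FullPushImage f A [] B) : f A B = (A, B) := by
  obtain ⟨c, a, u, b, hs, rfl, hU, rfl⟩ := h
  obtain rfl := eq_nil_of_pushOut_eq_nil hU.symm
  exact hf.push_normal c (not_swappable_nil_iff.mp hs)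

theorem inner {pre post : List S} {x y : S} (h : FullPushImage f A (pre ++ x :: y :: post) B)
    (hxy : f x y ≠ (x, y)) : FullPushImage f A (pre ++ (f x y).1 :: (f x y).2 :: post) B := by
  obtain ⟨c, a, u, b, hs, rfl, hU, rfl⟩ := h
  obtain ⟨upre, α, β, upost, rfl, hαβ, hout, hcarry⟩ := hf.exists_pushOut_rewrite hU.symm hxy
  exact ⟨c, a, _, b, fun h => hs (.inner upre upost α β hαβ h), rfl, hout.symm, by rw [hcarry]⟩

theorem left {x : S} (h : FullPushImage f A (x :: U) B) (hAx : f A x ≠ (A, x)) :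
    FullPushImage f (f A x).2 U B := by
  obtain ⟨c, a, u, b, hs, rfl, hU, rfl⟩ := h
  rcases u with _ | ⟨α, u⟩
  · simp at hU
  simp only [pushOut, List.cons.injEq] at hU
  obtain ⟨rfl, rfl⟩ := hU
  have haα : f a α ≠ (a, α) := fun h => hAx (hf.push_normal c h)
  refine ⟨(f c (f a α).1).2, (f a α).2, u, b, fun h => hs (.left haα h), hf.braid_snd c a α,
    ?_, ?_⟩ <;> simp only [pushCarry, hf.braid_last c a α]

theorem right {y : S} (h : FullPushImage f A (U ++ [y]) B) (hyB : f y B ≠ (y, B)) :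
    FullPushImage f A U (f y B).1 := by
  obtain ⟨c, a, u, b, hs, rfl, hU, rfl⟩ := h
  obtain ⟨u, β, rfl, rfl, rfl, hcarry⟩ := pushOut_eq_append_singleton hU.symm
  set t := pushCarry f (f c a).2 u
  have hβb : f β b ≠ (β, b) := fun h => hyB (by rw [hcarry]; exact hf.push_normal t h)
  exact ⟨c, a, u, (f β b).1, fun h => hs (.right hβb h), rfl, rfl, by
    rw [hcarry, hf.braid_fst]⟩

end FullPushImage

namespace PartialPushImage

variable (hf : BraidIdempotent f) {A B : S} {U : List S}

theorem ne_nil (h : PartialPushImage f A U B) : U ≠ [] := by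
  obtain ⟨c, a, w, v, -, -, rfl⟩ := h
  simp

theorem right {y : S} (h : PartialPushImage f A (U ++ [y]) B) (hyB : f y B ≠ (y, B)) :
    PushImage f A U (f y B).1 := by
  obtain ⟨c, a, w, v, hs, rfl, hU⟩ := h
  rcases List.eq_nil_or_concat v with rfl | ⟨v, γ, rfl⟩
  · obtain ⟨rfl, hy⟩ := List.append_inj' hU rfl
    obtain rfl : y = _ := by simpa using hy
    exact .inl ⟨c, a, w, B, by simpa using hs, rfl, rfl, rfl⟩
  · rw [List.concat_eq_append, ← List.cons_append, ← List.append_assoc] at hU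
    obtain ⟨rfl, hγ⟩ := List.append_inj' hU rfl
    obtain rfl : y = γ := by simpa using hγ
    exact .inr ⟨c, a, w, v, fun h => hs (by simpa using Swappable.right hyB h), rfl, rfl⟩

include hf

theorem inner {pre post : List S} {x y : S}
    (h : PartialPushImage f A (pre ++ x :: y :: post) B) (hxy : f x y ≠ (x, y)) :
    PartialPushImage f A (pre ++ (f x y).1 :: (f x y).2 :: post) B := by
  obtain ⟨c, a, w, v, hs, rfl, hU⟩ := h
  have at_carry (hpre : pushOut f (f c a).2 w = pre) (hx : pushCarry f (f c a).2 w = x)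
      (hv : v = y :: post) :
      PartialPushImage f (f c a).1 (pre ++ (f x y).1 :: (f x y).2 :: post) B :=
    ⟨c, a, w ++ [y], post, by simpa [hv] using hs, rfl, by
      simp [← hpre, ← hx, pushOut_append, pushCarry_append]⟩
  -- The redex starts at the carry, lies in `v`, straddles the last output and the carry
  -- (impossible, as `f` is idempotent), or lies in the outputs.
  rcases List.append_eq_append_iff.mp hU.symm with ⟨_ | ⟨z, as⟩, hpre, hv⟩ | ⟨bs, hout, hpost⟩
  · simp only [List.nil_append, List.cons.injEq] at hv
    exact at_carry (by simpa using hpre.symm) hv.1 hv.2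
  · simp only [List.cons_append, List.cons.injEq] at hv
    obtain ⟨rfl, rfl⟩ := hv
    refine ⟨c, a, w, as ++ (f x y).1 :: (f x y).2 :: post, fun h => hs ?_, rfl, by simp [hpre]⟩
    simpa using Swappable.inner (w ++ as) post x y hxy (by simpa using h)
  · rcases bs with _ | ⟨z, _ | ⟨z', bs⟩⟩
    · simp only [List.nil_append, List.cons.injEq] at hpost
      exact at_carry (by simpa using hout) hpost.1.symm hpost.2.symm
    · simp only [List.cons_append, List.nil_append, List.cons.injEq] at hpost
      obtain ⟨rfl, rfl, rfl⟩ := hpost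
      obtain ⟨u, β, rfl, -, rfl, hcarry⟩ := pushOut_eq_append_singleton hout
      exact absurd (by rw [hcarry, hf.idem]) hxy
    · simp only [List.cons_append, List.cons.injEq] at hpost
      obtain ⟨rfl, rfl, rfl⟩ := hpost
      obtain ⟨upre, α, β, upost, rfl, hαβ, hout', hcarry⟩ := hf.exists_pushOut_rewrite hout hxy
      refine ⟨c, a, upre ++ (f α β).1 :: (f α β).2 :: upost, v, fun h => hs ?_, rfl,
        by rw [hout', hcarry]; simp⟩
      simpa using Swappable.inner upre (upost ++ v) α β hαβ (by simpa using h)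

theorem left {x : S} (h : PartialPushImage f A (x :: U) B) (hAx : f A x ≠ (A, x)) :
    PartialPushImage f (f A x).2 U B := by
  obtain ⟨c, a, w, v, hs, rfl, hU⟩ := h
  cases w with
  | nil =>
    simp only [pushOut, pushCarry, List.nil_append, List.cons.injEq] at hU
    exact absurd (by rw [hU.1, hf.idem]) hAx
  | cons α w =>
    simp only [pushOut, List.cons_append, List.cons.injEq] at hU
    obtain ⟨rfl, rfl⟩ := hU
    have haα : f a α ≠ (a, α) := fun h => hAx (hf.push_normal c h)
    refine ⟨(f c (f a α).1).2, (f a α).2, w, v, fun h => hs (.left haα h), hf.braid_snd c a α,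
      ?_⟩
    simp only [pushCarry, hf.braid_last c a α]

end PartialPushImage

theorem BraidIdempotent.swapClosed_pushImage (hf : BraidIdempotent f) :
    SwapClosed f (PushImage f) where
  base h := h.elim (FullPushImage.base hf) fun h => absurd rfl h.ne_nil
  inner h hxy := h.imp (FullPushImage.inner hf · hxy) (PartialPushImage.inner hf · hxy)
  left h hax := h.imp (FullPushImage.left hf · hax) (PartialPushImage.left hf · hax)
  right h hyb := h.elim (fun h => .inl (FullPushImage.right hf h hyb))
    (PartialPushImage.right · hyb)

theorem BraidIdempotent.not_swappable_cons (hf : BraidIdempotent f) {a b : S} {u : List S}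
    (h : ¬ Swappable f a u b) (c : S) : ¬ Swappable f (f c a).1 ((f c a).2 :: u) b :=
  hf.swapClosed_pushImage.not_swappable (.inr ⟨c, a, [], u, h, rfl, rfl⟩)

theorem BraidIdempotent.not_swappable_concat (hf : BraidIdempotent f) {a b : S} {u : List S}
    (h : ¬ Swappable f a u b) (c : S) : ¬ Swappable f a (u ++ [(f b c).1]) (f b c).2 := by
  have h' : ¬ Swappable (QN.mirror f) b u.reverse a := by simpa [swappable_mirror_iff] using h
  simpa [swappable_mirror_iff, QN.mirror] using hf.mirror.not_swappable_cons h' c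

def PairStep (f : S → S → S × S) (w w' : List S) : Prop :=
  ∃ u v s t, f s t ≠ (s, t) ∧ w = u ++ s :: t :: v ∧ w' = u ++ (f s t).1 :: (f s t).2 :: v

def FrozenAgainst (f : S → S → S × S) (p : ℕ × S) (M : List (ℕ × S)) : Prop :=
  ∀ B C j t, M = B ++ (j, t) :: C → j < p.1 → ¬ Swappable f p.2 (B.map Prod.snd) t

/-- In the labelled word `M`, no two letters with inverted labels can ever be brought next to
each other as a non-normal pair. -/
def InversionsFrozen (f : S → S → S × S) : List (ℕ × S) → Prop
  | [] => True
  | p :: M => FrozenAgainst f p M ∧ InversionsFrozen f M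

theorem InversionsFrozen.frozenAgainst {A M : List (ℕ × S)} {p : ℕ × S}
    (h : InversionsFrozen f (A ++ p :: M)) : FrozenAgainst f p M := by
  induction A with
  | nil => exact h.1
  | cons q A ih => exact ih h.2

theorem inversionsFrozen_of_sorted {M : List (ℕ × S)} (h : (M.map Prod.fst).Pairwise (· < ·)) :
    InversionsFrozen f M := by
  induction M with
  | nil => trivial
  | cons p M ih =>
    simp only [List.map_cons, List.pairwise_cons, List.mem_map] at h
    refine ⟨fun B C j t hM hj => ?_, ih h.2⟩
    exact absurd (h.1 j ⟨(j, t), by simp [hM], rfl⟩) (by omega)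

theorem BraidIdempotent.frozenAgainst_rewrite (hf : BraidIdempotent f) {q : ℕ × S}
    {P Q : List (ℕ × S)} {i j : ℕ} {s t : S} (hst : f s t ≠ (s, t))
    (h : FrozenAgainst f q (P ++ (i, s) :: (j, t) :: Q)) :
    FrozenAgainst f q (P ++ (j, (f s t).1) :: (i, (f s t).2) :: Q) := by
  intro B C y b hM hy
  rcases List.append_cons_eq_append_cons_cons hM.symm with
    ⟨B₂, rfl, rfl⟩ | ⟨rfl, hq, rfl⟩ | ⟨rfl, hq, rfl⟩ | ⟨B₂, rfl, rfl⟩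
  · exact h B (B₂ ++ (i, s) :: (j, t) :: Q) y b (by simp) hy
  · simp only [Prod.mk.injEq] at hq
    obtain ⟨rfl, rfl⟩ := hq
    have := h (B ++ [(i, s)]) Q y t (by simp) hy
    exact fun hs => this (by simpa using Swappable.right hst hs)
  · simp only [Prod.mk.injEq] at hq
    obtain ⟨rfl, rfl⟩ := hq
    simpa using hf.not_swappable_concat (h P ((j, t) :: C) y s rfl hy) t
  · have := h (P ++ (i, s) :: (j, t) :: B₂) C y b (by simp) hy
    exact fun hs => this (by simpa using Swappable.inner _ _ s t hst (by simpa using hs))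

theorem BraidIdempotent.inversionsFrozen_rewrite (hf : BraidIdempotent f)
    {A B : List (ℕ × S)} {i j : ℕ} {s t : S} (hst : f s t ≠ (s, t))
    (h : InversionsFrozen f (A ++ (i, s) :: (j, t) :: B)) :
    InversionsFrozen f (A ++ (j, (f s t).1) :: (i, (f s t).2) :: B) := by
  induction A with
  | cons p A ih => exact ⟨hf.frozenAgainst_rewrite hst h.1, ih h.2⟩
  | nil =>
    obtain ⟨his, hjt, hB⟩ := h
    refine ⟨?_, fun B' C y b hB' hy hs => his ((j, t) :: B') C y b (by simp [hB']) hy ?_, hB⟩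
    · rintro (_ | ⟨p, B'⟩) C y b hB' hy
      · simp only [List.nil_append, List.cons.injEq, Prod.mk.injEq] at hB'
        obtain ⟨⟨rfl, rfl⟩, -⟩ := hB'
        exact not_swappable_nil_iff.mpr (hf.idem s t)
      · simp only [List.cons_append, List.cons.injEq] at hB'
        obtain ⟨rfl, rfl⟩ := hB'
        simpa using hf.not_swappable_cons (hjt B' C y b rfl hy) s
    · simpa using Swappable.left hst hs

def invCount : List ℕ → ℕ
  | [] => 0
  | i :: l => l.countP (· < i) + invCount l

theorem invCount_swap {i j : ℕ} (hij : i < j) (A B : List ℕ) :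
    invCount (A ++ j :: i :: B) = invCount (A ++ i :: j :: B) + 1 := by
  induction A with
  | nil =>
    simp [invCount, hij, Nat.lt_asymm hij]
    omega
  | cons k A ih =>
    simp only [List.cons_append, invCount, List.countP_append, List.countP_cons, ih]
    omega

theorem invCount_eq_zero_of_sorted {l : List ℕ} (h : l.Pairwise (· < ·)) : invCount l = 0 := by
  induction l with
  | nil => rfl
  | cons i l ih =>
    rw [List.pairwise_cons] at h
    simp only [invCount, ih h.2, add_zero, List.countP_eq_zero, decide_eq_true_eq, not_lt]
    exact fun k hk => (h.1 k hk).le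

theorem two_mul_invCount_le (l : List ℕ) : 2 * invCount l ≤ l.length * (l.length - 1) := by
  induction l with
  | nil => rfl
  | cons i l ih =>
    have hc : l.countP (· < i) ≤ l.length := List.countP_le_length
    rcases l with _ | ⟨k, l⟩
    · simp [invCount]
    · simp only [invCount, List.length_cons, Nat.add_sub_cancel] at ih hc ⊢
      nlinarith

theorem BraidIdempotent.exists_labelled_step (hf : BraidIdempotent f) {M : List (ℕ × S)}
    {w' : List S} (hnd : (M.map Prod.fst).Nodup) (hM : InversionsFrozen f M)
    (h : PairStep f (M.map Prod.snd) w') :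
    ∃ M' : List (ℕ × S), M'.map Prod.snd = w' ∧ (M'.map Prod.fst).Perm (M.map Prod.fst) ∧
      InversionsFrozen f M' ∧ invCount (M'.map Prod.fst) = invCount (M.map Prod.fst) + 1 := by
  obtain ⟨u, v, s, t, hst, hw, rfl⟩ := h
  obtain ⟨A, M₂, rfl, rfl, hM₂⟩ := List.map_eq_append_iff.mp hw
  obtain ⟨⟨i, s⟩, M₃, rfl, rfl, hM₃⟩ := List.map_eq_cons_iff.mp hM₂
  obtain ⟨⟨j, t⟩, B, rfl, rfl, rfl⟩ := List.map_eq_cons_iff.mp hM₃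
  have hij : i < j := by
    have hne : i ≠ j := by simp_all [List.nodup_append]
    have : ¬ j < i := fun hji => hM.frozenAgainst [] B j t rfl hji (.base hst)
    omega
  refine ⟨A ++ (j, (f s t).1) :: (i, (f s t).2) :: B, by simp, ?_,
    hf.inversionsFrozen_rewrite hst hM, by simpa using invCount_swap hij _ _⟩
  simpa using List.Perm.append_left _ (List.Perm.swap _ _ _)

theorem BraidIdempotent.pairStep_chain_bound (hf : BraidIdempotent f) (g : ℕ → List S)
    (l : ℕ) (h : ∀ k < l, PairStep f (g k) (g (k + 1))) :
    2 * l ≤ (g 0).length * ((g 0).length - 1) := by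
  set n := (g 0).length
  have labelled : ∀ k ≤ l, ∃ M : List (ℕ × S), M.map Prod.snd = g k ∧
      (M.map Prod.fst).Perm (List.range n) ∧ InversionsFrozen f M ∧
      invCount (M.map Prod.fst) = k := by
    intro k hk
    induction k with
    | zero =>
      have hfst : ((List.range n).zip (g 0)).map Prod.fst = List.range n :=
        List.map_fst_zip (by simp [n])
      refine ⟨(List.range n).zip (g 0), List.map_snd_zip (by simp [n]), by rw [hfst],
        inversionsFrozen_of_sorted ?_, ?_⟩ <;> rw [hfst]
      exacts [List.pairwise_lt_range, invCount_eq_zero_of_sorted List.pairwise_lt_range]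
    | succ k ih =>
      obtain ⟨M, hw, hperm, hM, hc⟩ := ih (by omega)
      obtain ⟨M', hw', hperm', hM', hc'⟩ := hf.exists_labelled_step
        (hperm.nodup_iff.mpr List.nodup_range) hM (hw ▸ h k (by omega))
      exact ⟨M', hw', hperm'.trans hperm, hM', by rw [hc', hc]⟩
  obtain ⟨M, -, hperm, -, hc⟩ := labelled l le_rfl
  simpa [hc, hperm.length_eq] using two_mul_invCount_le (M.map Prod.fst)

section Rewriting

variable {A B : Type*}

theorem confluent_of_invariant {R : List A → List A → Prop} (φ : List A → List A)
    (hstep : ∀ x y, RStep R x y → φ y = φ x)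
    (hreach : ∀ w, Relation.ReflTransGen (RStep R) w (φ w)) : Confluent R := by
  have hinv : ∀ x y, Relation.ReflTransGen (RStep R) x y → φ y = φ x := by
    intro x y h
    induction h with
    | refl => rfl
    | tail _ hyz ih => rw [hstep _ _ hyz, ih]
  intro w w₁ w₂ h₁ h₂
  exact ⟨φ w, hinv _ _ h₁ ▸ hreach w₁, hinv _ _ h₂ ▸ hreach w₂⟩

theorem terminating_of_length_le {R : List A → List A → Prop} {R' : List B → List B → Prop}
    (φ : List B → List A) (hR : Terminating R)
    (hle : ∀ x y, RStep R' x y → y.length ≤ x.length)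
    (heq : ∀ x y, RStep R' x y → y.length = x.length → RStep R (φ x) (φ y)) :
    Terminating R' := by
  rintro ⟨g, hg⟩
  have antitone : ∀ g : ℕ → List B, (∀ k, RStep R' (g k) (g (k + 1))) →
      ∀ k, (g k).length ≤ (g 0).length := by
    intro g hg k
    induction k with
    | zero => rfl
    | succ k ih => exact (hle _ _ (hg k)).trans ih
  induction hn : (g 0).length using Nat.strong_induction_on generalizing g with
  | _ n ih =>
    by_cases hall : ∀ k, (g (k + 1)).length = (g k).length
    · exact hR ⟨fun k => φ (g k), fun k => heq _ _ (hg k) (hall k)⟩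
    · obtain ⟨k, hk⟩ := not_forall.mp hall
      have hlt := lt_of_le_of_ne (hle _ _ (hg k)) hk
      exact ih _ (hn ▸ by simpa using hlt.trans_le (antitone g hg k)) (fun i => g (i + (k + 1)))
        (fun i => by simpa [Nat.add_right_comm] using hg (i + (k + 1))) rfl

end Rewriting

section Neutral

variable (e : S)

@[simp]
theorem pie_nil : pie e [] = [] := rfl

@[simp]
theorem pie_cons_self (w : List S) : pie e (e :: w) = pie e w := by
  simp [pie]

theorem pie_cons_of_ne {s : S} (h : s ≠ e) (w : List S) : pie e (s :: w) = ⟨s, h⟩ :: pie e w := by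
  simp [pie, h]

@[simp]
theorem pie_append (u v : List S) : pie e (u ++ v) = pie e u ++ pie e v :=
  List.filterMap_append

@[simp]
theorem pie_map_val (w : List {s : S // s ≠ e}) : pie e (w.map Subtype.val) = w := by
  induction w with
  | nil => rfl
  | cons s w ih => rw [List.map_cons, pie_cons_of_ne e s.2, ih]

@[simp]
theorem pie_replicate (k : ℕ) : pie e (List.replicate k e) = [] := by
  induction k <;> simp_all [List.replicate_succ]

theorem length_pie_le (w : List S) : (pie e w).length ≤ w.length :=
  List.length_filterMap_le _ _

theorem map_val_pie_of_length_eq {w : List S} (h : (pie e w).length = w.length) :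
    (pie e w).map Subtype.val = w := by
  induction w with
  | nil => rfl
  | cons s w ih =>
    by_cases hs : s = e
    · have := length_pie_le e w
      simp only [hs, pie_cons_self, List.length_cons] at h
      omega
    · simp only [pie_cons_of_ne e hs, List.length_cons, add_left_inj] at h
      simp [pie_cons_of_ne e hs, ih h]

end Neutral

namespace Normalisation

variable (ns : Normalisation S)

theorem N_pair (s t : S) : ns.N [s, t] = [(nbar ns.N s t).1, (nbar ns.N s t).2] := by
  obtain ⟨x, y, h⟩ := List.length_eq_two.mp (ns.length_eq [s, t])
  simp [nbar, h, pairOf]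

theorem N_idem (w : List S) : ns.N (ns.N w) = ns.N w := by
  simpa using ns.mid [] [] w

theorem nbar_eq_self_iff {s t : S} : nbar ns.N s t = (s, t) ↔ ns.N [s, t] = [s, t] := by
  rw [N_pair]
  simp [Prod.ext_iff]

theorem braidIdempotent_nbar (hl : LeftClass ns.N 3) (hr : RightClass ns.N 3) :
    BraidIdempotent (nbar ns.N) where
  idem s t := by
    rw [nbar_eq_self_iff, ← N_pair, N_idem]
  braid x a b := (hl [x, a, b] rfl).symm.trans (hr [x, a, b] rfl)

theorem rStep_rules_iff {x y : List S} : RStep (rules ns.N) x y ↔ PairStep (nbar ns.N) x y := by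
  constructor
  · rintro ⟨u, v, _, _, ⟨s, t, rfl, rfl, hne⟩, rfl, rfl⟩
    exact ⟨u, v, s, t, fun h => hne (ns.nbar_eq_self_iff.mp h), by simp, by simp [N_pair]⟩
  · rintro ⟨u, v, s, t, hne, rfl, rfl⟩
    exact ⟨u, v, [s, t], ns.N [s, t], ⟨s, t, rfl, rfl, fun h => hne (ns.nbar_eq_self_iff.mpr h)⟩,
      by simp, by simp [N_pair]⟩

theorem N_eq_of_rStep {x y : List S} (h : RStep (rules ns.N) x y) : ns.N y = ns.N x := by
  obtain ⟨u, v, _, _, ⟨s, t, rfl, rfl, -⟩, rfl, rfl⟩ := h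
  exact ns.mid u v [s, t]

theorem applyAt_eq_or_rStep (i : ℕ) (w : List S) :
    applyAt (nbar ns.N) i w = w ∨ RStep (rules ns.N) w (applyAt (nbar ns.N) i w) := by
  induction i using Nat.strong_induction_on generalizing w with
  | _ i ih =>
  match i, w with
  | 0, w => exact .inl rfl
  | 1, [] => exact .inl rfl
  | 1, [a] => exact .inl rfl
  | 1, a :: b :: l =>
    by_cases h : nbar ns.N a b = (a, b)
    · exact .inl (by simp [applyAt, h])
    · exact .inr (ns.rStep_rules_iff.mpr ⟨[], l, a, b, h, rfl, rfl⟩)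
  | n + 2, [] => exact .inl rfl
  | n + 2, a :: l =>
    rcases ih (n + 1) (by omega) l with h | ⟨u, v, r, r', hr, rfl, h⟩
    · exact .inl (by simp [applyAt, h])
    · refine .inr ⟨a :: u, v, r, r', hr, rfl, ?_⟩
      show a :: applyAt (nbar ns.N) (n + 1) (u ++ r ++ v) = _
      rw [h]
      rfl

theorem reflTransGen_applySeq (us : List ℕ) (w : List S) :
    Relation.ReflTransGen (RStep (rules ns.N)) w (applySeq (nbar ns.N) us w) := by
  induction us generalizing w with
  | nil => exact .refl
  | cons i us ih =>
    refine .trans ?_ (ih (applyAt (nbar ns.N) i w))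
    rcases ns.applyAt_eq_or_rStep i w with h | h
    · rw [h]
    · exact .single h

theorem reflTransGen_N (hg : NbarGenerated ns.N) (w : List S) :
    Relation.ReflTransGen (RStep (rules ns.N)) w (ns.N w) := by
  obtain ⟨us, hus⟩ := hg w
  exact hus ▸ ns.reflTransGen_applySeq us w

theorem confluent_rules (hg : NbarGenerated ns.N) : Confluent (rules ns.N) :=
  confluent_of_invariant ns.N (fun _ _ => ns.N_eq_of_rStep) (ns.reflTransGen_N hg)

theorem rules_chain_bound (hl : LeftClass ns.N 3) (hr : RightClass ns.N 3) (ℓ : ℕ)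
    (g : ℕ → List S) (h : ∀ k < ℓ, RStep (rules ns.N) (g k) (g (k + 1))) :
    ℓ ≤ (g 0).length * ((g 0).length - 1) / 2 := by
  have := (ns.braidIdempotent_nbar hl hr).pairStep_chain_bound g ℓ fun k hk =>
    ns.rStep_rules_iff.mp (h k hk)
  omega

theorem terminating_rules (hl : LeftClass ns.N 3) (hr : RightClass ns.N 3) :
    Terminating (rules ns.N) := by
  rintro ⟨g, hg⟩
  have := ns.rules_chain_bound hl hr ((g 0).length * ((g 0).length - 1) / 2 + 1) g
    fun k _ => hg k
  omega

variable {e : S}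

theorem N_append_replicate (he : Neutral ns.N e) (w : List S) (k : ℕ) :
    ns.N (w ++ List.replicate k e) = ns.N w ++ List.replicate k e := by
  induction k with
  | zero => simp
  | succ k ih => rw [List.replicate_succ', ← List.append_assoc, (he _).1, ih, List.append_assoc]

theorem exists_N_eq_N_pie_append (he : Neutral ns.N e) (w : List S) :
    ∃ k, ns.N w = ns.N ((pie e w).map Subtype.val) ++ List.replicate k e := by
  induction w with
  | nil => exact ⟨0, by simp⟩
  | cons s w ih =>
    obtain ⟨k, hk⟩ := ih
    by_cases hs : s = e
    · subst hs
      exact ⟨k + 1, by rw [pie_cons_self, (he w).2, hk, List.replicate_succ', List.append_assoc]⟩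
    · refine ⟨k, ?_⟩
      have hmid (w : List S) : ns.N (s :: ns.N w) = ns.N (s :: w) := by simpa using ns.mid [s] [] w
      rw [pie_cons_of_ne e hs, List.map_cons, ← hmid, hk, ← List.cons_append,
        N_append_replicate ns he, hmid]

theorem pie_N_eq_of_pie_eq (he : Neutral ns.N e) {w w' : List S} (h : pie e w = pie e w') :
    pie e (ns.N w) = pie e (ns.N w') := by
  obtain ⟨k, hk⟩ := ns.exists_N_eq_N_pie_append he w
  obtain ⟨k', hk'⟩ := ns.exists_N_eq_N_pie_append he w'
  simp [hk, hk', h]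

theorem pie_N_eq_of_rStep_rulesE (he : Neutral ns.N e) {x y : List {s : S // s ≠ e}}
    (h : RStep (rulesE ns.N e) x y) :
    pie e (ns.N (y.map Subtype.val)) = pie e (ns.N (x.map Subtype.val)) := by
  obtain ⟨u, v, _, _, ⟨s, t, rfl, -, rfl⟩, rfl, rfl⟩ := h
  rw [ns.pie_N_eq_of_pie_eq he (w' := u.map Subtype.val ++ ns.N [s.1, t.1] ++ v.map Subtype.val)
    (by simp only [List.map_append, pie_append, pie_map_val]), ns.mid]
  simp

theorem rStep_rulesE_or_pie_eq (he : Neutral ns.N e) {x y : List S}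
    (h : RStep (rules ns.N) x y) :
    pie e x = pie e y ∨ RStep (rulesE ns.N e) (pie e x) (pie e y) := by
  obtain ⟨u, v, _, _, ⟨s, t, rfl, rfl, hne⟩, rfl, rfl⟩ := h
  by_cases hs : s = e
  · subst hs
    have : ns.N [s, t] = [t, s] := by simpa [ns.single] using (he [t]).2
    by_cases ht : t = s
    · subst ht
      exact absurd this hne
    · simp [this, pie_cons_of_ne _ ht]
  · by_cases ht : t = e
    · subst ht
      exact absurd (by simpa [ns.single] using (he [s]).1) hne
    · refine .inr ⟨pie e u, pie e v, [⟨s, hs⟩, ⟨t, ht⟩], pie e (ns.N [s, t]),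
        ⟨⟨s, hs⟩, ⟨t, ht⟩, rfl, hne, rfl⟩, ?_, by simp⟩
      simp [pie_cons_of_ne e hs, pie_cons_of_ne e ht]

theorem reflTransGen_rulesE_pie (he : Neutral ns.N e) {x y : List S}
    (h : Relation.ReflTransGen (RStep (rules ns.N)) x y) :
    Relation.ReflTransGen (RStep (rulesE ns.N e)) (pie e x) (pie e y) := by
  induction h with
  | refl => exact .refl
  | tail _ hyz ih =>
    rcases ns.rStep_rulesE_or_pie_eq he hyz with h | h
    · exact h ▸ ih
    · exact ih.tail h

theorem reflTransGen_rulesE_pie_N (hg : NbarGenerated ns.N) (he : Neutral ns.N e)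
    (w : List {s : S // s ≠ e}) :
    Relation.ReflTransGen (RStep (rulesE ns.N e)) w (pie e (ns.N (w.map Subtype.val))) := by
  have h := ns.reflTransGen_rulesE_pie he (ns.reflTransGen_N hg (w.map Subtype.val))
  rwa [pie_map_val] at h

theorem confluent_rulesE (hg : NbarGenerated ns.N) (he : Neutral ns.N e) :
    Confluent (rulesE ns.N e) :=
  confluent_of_invariant (fun w => pie e (ns.N (w.map Subtype.val)))
    (fun _ _ => ns.pie_N_eq_of_rStep_rulesE he) (ns.reflTransGen_rulesE_pie_N hg he)

theorem length_le_of_rStep_rulesE {x y : List {s : S // s ≠ e}} (h : RStep (rulesE ns.N e) x y) :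
    y.length ≤ x.length := by
  obtain ⟨u, v, _, _, ⟨s, t, rfl, -, rfl⟩, rfl, rfl⟩ := h
  have := length_pie_le e (ns.N [s.1, t.1])
  simp only [ns.length_eq, List.length_append, List.length_cons, List.length_nil] at this ⊢
  omega

theorem rStep_rules_of_rStep_rulesE {x y : List {s : S // s ≠ e}}
    (h : RStep (rulesE ns.N e) x y) (hlen : y.length = x.length) :
    RStep (rules ns.N) (x.map Subtype.val) (y.map Subtype.val) := by
  obtain ⟨u, v, _, _, ⟨s, t, rfl, hne, rfl⟩, rfl, rfl⟩ := h
  have hfull : (pie e (ns.N [s.1, t.1])).map Subtype.val = ns.N [s.1, t.1] := by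
    refine map_val_pie_of_length_eq e ?_
    simp only [ns.length_eq, List.length_append, List.length_cons, List.length_nil] at hlen ⊢
    omega
  exact ⟨u.map Subtype.val, v.map Subtype.val, [s.1, t.1], ns.N [s.1, t.1],
    ⟨s.1, t.1, rfl, rfl, hne⟩, by simp, by simp [hfull]⟩

theorem terminating_rulesE (hl : LeftClass ns.N 3) (hr : RightClass ns.N 3) :
    Terminating (rulesE ns.N e) :=
  terminating_of_length_le (List.map Subtype.val) (ns.terminating_rules hl hr)
    (fun _ _ => ns.length_le_of_rStep_rulesE) (fun _ _ => ns.rStep_rules_of_rStep_rulesE)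

end Normalisation

end QN

open QN
/-- If `(S, N)` is a quadratic normalisation of class `(3, 3)`, then the
associated rewriting system is convergent, with every rewriting sequence from a length-`p`
word of length at most `p(p−1)/2`; moreover for an `N`-neutral `e`, the induced system over
`S∖{e}` is also convergent. -/
theorem statement15 {S : Type*} (ns : Normalisation S) (hq : Quadratic ns.N)
    (hl : LeftClass ns.N 3) (hr : RightClass ns.N 3) :
    (Terminating (rules ns.N) ∧ Confluent (rules ns.N) ∧
      ∀ (p ℓ : ℕ) (f : ℕ → List S), (f 0).length = p →
        (∀ k < ℓ, RStep (rules ns.N) (f k) (f (k + 1))) → ℓ ≤ p * (p - 1) / 2) ∧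
    (∀ e : S, Neutral ns.N e →
      Terminating (rulesE ns.N e) ∧ Confluent (rulesE ns.N e)) :=
  ⟨⟨ns.terminating_rules hl hr, ns.confluent_rules hq.2,
    fun _ ℓ f hp h => hp ▸ ns.rules_chain_bound hl hr ℓ f h⟩,
    fun _ he => ⟨ns.terminating_rulesE hl hr, ns.confluent_rulesE hq.2 he⟩⟩
end

section
/- Let M be a left-cancellative monoid and S a subset of M. Let s₁, s₂, s₁', s₂', t₀, t₁, t₂ be elements of S satisfying t₀·s₁ = s₁'·t₁ and t₁·s₂ = s₂'·t₂ in M. If the pair s₁, s₂ is S-normal and the pairs s₁', t₁ and s₂', t₂ are S-normal, then the pair s₁', s₂' is S-normal. -/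
open QN
/-- In a left-cancellative monoid `M` with `S ⊆ M`: if `t₀·s₁ = s₁'·t₁`
and `t₁·s₂ = s₂'·t₂` hold, the pair `s₁, s₂` is `S`-normal and the pairs `s₁', t₁` and
`s₂', t₂` are `S`-normal, then the pair `s₁', s₂'` is `S`-normal. -/
theorem statement18 {M : Type*} [Monoid M]
    (hcanc : ∀ a b c : M, a * b = a * c → b = c)
    (S : Set M) (s₁ s₂ s₁' s₂' t₀ t₁ t₂ : M)
    (hs₁ : s₁ ∈ S) (hs₂ : s₂ ∈ S) (hs₁' : s₁' ∈ S) (hs₂' : s₂' ∈ S)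
    (ht₀ : t₀ ∈ S) (ht₁ : t₁ ∈ S) (ht₂ : t₂ ∈ S)
    (e₁ : t₀ * s₁ = s₁' * t₁) (e₂ : t₁ * s₂ = s₂' * t₂)
    (n₁ : SNormalPair S s₁ s₂) (n₂ : SNormalPair S s₁' t₁) (n₃ : SNormalPair S s₂' t₂) :
    SNormalPair S s₁' s₂' := by
  intro s hs f hdvd
  obtain ⟨g, hg⟩ := hdvd
  have h1 : LeftDvd s (f * t₀ * s₁ * s₂) := by
    refine ⟨g * t₂, ?_⟩
    have : f * t₀ * s₁ * s₂ = f * s₁' * s₂' * t₂ := by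
      rw [mul_assoc f t₀ s₁, e₁, ← mul_assoc, mul_assoc (f * s₁') t₁ s₂, e₂, ← mul_assoc]
    rw [this, ← hg, mul_assoc]
  have h2 := n₁ s hs (f * t₀) h1
  have h3 : LeftDvd s (f * s₁' * t₁) := by
    rwa [mul_assoc f t₀ s₁, e₁, ← mul_assoc] at h2
  exact n₂ s hs f h3
end
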